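/- For every positive integer M, the number of orbits of vanishing binary words of length M under the rotation action of the cyclic group Z/M equals (1/M) · Σ_{i | M, i even} φ(i) · 2^{M/i}, where the sum runs over the even divisors i of M. -/

import Mathlib

/-- Rotation of a binary word of length `M` by `k`: `(c_k · x)(i) = x (i + k)`. -/
def rot (M : ℕ) (k : ZMod M) (x : ZMod M → ZMod 2) : ZMod M → ZMod 2 :=
  fun i => x (i + k)

/-- The orbit of a binary word under the rotation action of the cyclic group `ZMod M`. -/
def rotOrbit (M : ℕ) (x : ZMod M → ZMod 2) : Set (ZMod M → ZMod 2) :=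
  {y | ∃ k : ZMod M, y = rot M k x}

/-- A binary word `x` of length `M` is vanishing if there is a divisor `d` of `M` with
`M/d` even such that `x` is `d`-periodic and the block `(x 0, …, x (d-1))` contains an
odd number of ones. -/
def Vanishing (M : ℕ) (x : ZMod M → ZMod 2) : Prop :=
  ∃ d : ℕ, d ∣ M ∧ Even (M / d) ∧ (∀ i : ZMod M, x (i + (d : ZMod M)) = x i) ∧
    Odd ((Finset.range d).filter (fun j : ℕ => x ((j : ZMod M)) = 1)).card

/-!
Write `M = 2 ^ A * m` with `m` odd. A word is vanishing exactly when, for some `β < A`, it is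
`2 ^ β * m`-periodic with an odd number of ones in its first period, and that `β` is unique
because the block sum over a longer level is an even multiple of it. By Burnside's lemma it
suffices to count, for each rotation `k`, the vanishing words it fixes: at level `β` these are
the `c`-periodic words, `c = gcd (2 ^ β * m) k`, with odd block sum over `2 ^ β * m`; there are
`2 ^ (c - 1)` of them if `2 ^ β * m / c` is odd and none otherwise. Grouping the rotations by
`c` turns the count into a sum over the divisors `d` of the levels with odd cofactor, and
`d ↦ M / d` matches these with the even divisors of `M`, the factor `2 ^ (A - β)` being absorbed
by `φ (M / d) = 2 ^ (A - β - 1) * φ (2 ^ β * m / d)`.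
-/

open Finset Function
open scoped Nat

theorem Function.Periodic.sum_range_mul {β : Type*} [AddCommMonoid β] {f : ℕ → β} {c : ℕ}
    (h : Periodic f c) (n : ℕ) : ∑ i ∈ range (n * c), f i = n • ∑ i ∈ range c, f i := by
  induction n with
  | zero => simp
  | succ n ih =>
    rw [add_mul, one_mul, sum_range_add, ih, succ_nsmul]
    refine congrArg _ (sum_congr rfl fun i _ => ?_)
    rw [add_comm]
    exact h.nat_mul n i

theorem Function.Periodic.natCast_of_dvd {R α : Type*} [Semiring R] {f : R → α} {c n : ℕ}
    (h : Periodic f c) (hcn : c ∣ n) : Periodic f n := by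
  obtain ⟨k, rfl⟩ := hcn
  rw [Nat.cast_mul, Nat.cast_comm]
  exact h.nat_mul k

theorem Function.Periodic.natCast_gcd {R α : Type*} [Ring R] {f : R → α} {a b : ℕ}
    (ha : Periodic f a) (hb : Periodic f b) : Periodic f (a.gcd b) := by
  have hbezout : ((a.gcd b : ℕ) : R) = a.gcdA b • (a : R) + a.gcdB b • (b : R) := by
    rw [← Int.cast_natCast, Nat.gcd_eq_gcd_ab]
    push_cast
    simp only [zsmul_eq_mul, Int.cast_comm]
  rw [hbezout]
  exact (ha.zsmul _).add_period (hb.zsmul _)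

theorem Function.periodic_natCast_gcd_iff {R α : Type*} [Ring R] {f : R → α} {a b : ℕ} :
    Periodic f (a.gcd b) ↔ Periodic f a ∧ Periodic f b :=
  ⟨fun h => ⟨h.natCast_of_dvd (Nat.gcd_dvd_left a b),
      h.natCast_of_dvd (Nat.gcd_dvd_right a b)⟩,
    fun h => h.1.natCast_gcd h.2⟩

theorem Function.Periodic.sum_range_add {β : Type*} [AddCancelCommMonoid β] {f : ℕ → β}
    {c : ℕ} (h : Periodic f c) (s : ℕ) :
    ∑ i ∈ range c, f (i + s) = ∑ i ∈ range c, f i := by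
  induction s with
  | zero => rfl
  | succ s ih =>
    have hshift := sum_range_succ' (fun i => f (i + s)) c
    rw [sum_range_succ, add_comm c, h s, ih, zero_add] at hshift
    rw [← add_right_cancel_iff (a := f s), hshift]
    simp only [add_assoc, add_comm 1 s]

theorem Function.Periodic.comp_natCast {R α : Type*} [Semiring R] {f : R → α} {c : ℕ}
    (h : Periodic f c) : Periodic (fun n : ℕ => f n) c := fun n => by
  simp only [Nat.cast_add, h n]

theorem ZMod.natCast_card_filter_eq_one {ι : Type*} (s : Finset ι) (f : ι → ZMod 2) :
    (#{i ∈ s | f i = 1} : ZMod 2) = ∑ i ∈ s, f i := by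
  rw [natCast_card_filter]
  refine sum_congr rfl fun i _ => ?_
  generalize f i = a
  revert a
  decide

theorem Fin.card_filter_sum_eq {G : Type*} [AddCommGroup G] [Fintype G]
    [DecidableEq G] (n : ℕ) (s : G) :
    #{y : Fin (n + 1) → G | ∑ i, y i = s} = Fintype.card G ^ n := by
  calc #{y : Fin (n + 1) → G | ∑ i, y i = s}
      = #(univ : Finset (Fin n → G)) := by
        refine card_nbij' Fin.tail (fun t => Fin.cons (s - ∑ i, t i) t) (by simp) (by simp)
          (fun y hy => ?_) (fun t _ => Fin.tail_cons _ _)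
        rw [mem_coe, mem_filter, Fin.sum_univ_succ] at hy
        rw [← hy.2]
        exact (congrArg (Fin.cons · _) (add_sub_cancel_right _ _)).trans (Fin.cons_self_tail y)
    _ = Fintype.card G ^ n := by simp

theorem ZMod.val_add_natCast_mod_of_dvd {M c : ℕ} [NeZero M] (hcM : c ∣ M) (i : ZMod M) :
    (i + c).val % c = i.val % c := by
  rw [ZMod.val_add, Nat.mod_mod_of_dvd _ hcM, ZMod.val_natCast, Nat.add_mod,
    Nat.mod_mod_of_dvd c hcM, Nat.mod_self, add_zero, Nat.mod_mod]

instance Function.Periodic.decidable {α β : Type*} [Add α] [Fintype α] [DecidableEq β]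
    (f : α → β) (c : α) : Decidable (Periodic f c) :=
  inferInstanceAs (Decidable (∀ x, f (x + c) = f x))

section Words

variable {M : ℕ}

theorem rot_eq_self_iff_periodic [NeZero M] {k : ZMod M} {x : ZMod M → ZMod 2} :
    rot M k x = x ↔ Periodic x (k.val : ZMod M) := by
  rw [ZMod.natCast_zmod_val]
  exact funext_iff

theorem vanishing_iff_sum_eq_one {x : ZMod M → ZMod 2} :
    Vanishing M x ↔
      ∃ d, d ∣ M ∧ Even (M / d) ∧ Periodic x d ∧ ∑ j ∈ range d, x j = 1 := by
  simp only [Vanishing, ← ZMod.natCast_eq_one_iff_odd, ZMod.natCast_card_filter_eq_one]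
  rfl

theorem sum_range_eq_of_periodic {R : Type*} [Semiring R] {x : ZMod M → R} {c e : ℕ}
    (h : Periodic x c) (hce : c ∣ e) :
    ∑ j ∈ range e, x j = (e / c : ℕ) * ∑ j ∈ range c, x j := by
  obtain ⟨q, rfl⟩ := hce
  rcases c.eq_zero_or_pos with rfl | hc
  · simp
  rw [Nat.mul_div_cancel_left q hc, mul_comm c, h.comp_natCast.sum_range_mul, nsmul_eq_mul]

theorem card_filter_periodic [NeZero M] {α : Type*} [Fintype α] [DecidableEq α] {c : ℕ}
    (hc : 0 < c) (hcM : c ∣ M) (P : (Fin c → α) → Prop) [DecidablePred P] :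
    #{x : ZMod M → α | Periodic x c ∧ P (fun j => x (j : ℕ))} =
      #{y : Fin c → α | P y} := by
  have hcast : ∀ j : Fin c, ((j : ℕ) : ZMod M).val = j :=
    fun j => ZMod.val_cast_of_lt (j.2.trans_le (Nat.le_of_dvd (NeZero.pos M) hcM))
  refine card_nbij' (fun x j => x (j : ℕ)) (fun y i => y ⟨i.val % c, Nat.mod_lt _ hc⟩)
    (fun x hx => ?_) (fun y hy => ?_) (fun x hx => ?_) (fun y _ => ?_)
  · simp only [mem_coe, mem_filter_univ] at hx ⊢
    exact hx.2
  · simp only [mem_coe, mem_filter_univ] at hy ⊢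
    refine ⟨fun i => by simp only [ZMod.val_add_natCast_mod_of_dvd hcM], ?_⟩
    convert hy using 2 with j
    simp only [hcast, Nat.mod_eq_of_lt j.2]
  · simp only [mem_coe, mem_filter_univ] at hx
    funext i
    simpa using hx.1.comp_natCast.map_mod_nat i.val
  · funext j
    simp only [hcast, Nat.mod_eq_of_lt j.2]

theorem card_filter_periodic_sum_range_eq [NeZero M] {c : ℕ} (hc : 0 < c) (hcM : c ∣ M)
    (s : ZMod 2) :
    #{x : ZMod M → ZMod 2 | Periodic x c ∧ ∑ j ∈ range c, x j = s} = 2 ^ (c - 1) := by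
  obtain ⟨n, rfl⟩ := Nat.exists_eq_add_one_of_ne_zero hc.ne'
  simp only [Finset.sum_range]
  rw [card_filter_periodic hc hcM (fun y => ∑ j, y j = s),
    Fin.card_filter_sum_eq, ZMod.card, Nat.add_sub_cancel]

theorem sum_range_eq_zero_of_periodic {x : ZMod M → ZMod 2} {c e : ℕ} (h : Periodic x c)
    (hce : c ∣ e) (heven : Even (e / c)) : ∑ j ∈ range e, x j = 0 := by
  rw [sum_range_eq_of_periodic h hce, ZMod.natCast_eq_zero_iff_even.mpr heven, zero_mul]

theorem sum_range_eq_of_periodic_of_odd {x : ZMod M → ZMod 2} {c e : ℕ} (h : Periodic x c)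
    (hce : c ∣ e) (hodd : Odd (e / c)) : ∑ j ∈ range e, x j = ∑ j ∈ range c, x j := by
  rw [sum_range_eq_of_periodic h hce, ZMod.natCast_eq_one_iff_odd.mpr hodd, one_mul]

theorem card_filter_periodic_sum_range_eq_one_of_dvd [NeZero M] {c e : ℕ} (hc : 0 < c)
    (hce : c ∣ e) (heM : e ∣ M) :
    #{x : ZMod M → ZMod 2 | Periodic x c ∧ ∑ j ∈ range e, x j = 1}
      = if Odd (e / c) then 2 ^ (c - 1) else 0 := by
  split_ifs with hodd
  · rw [← card_filter_periodic_sum_range_eq hc (hce.trans heM) 1]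
    exact congrArg card (filter_congr fun x _ => and_congr_right fun hx => by
      rw [sum_range_eq_of_periodic_of_odd hx hce hodd])
  · rw [card_eq_zero, filter_eq_empty_iff]
    rintro x - ⟨hx, hsum⟩
    rw [sum_range_eq_zero_of_periodic hx hce (Nat.not_odd_iff_even.mp hodd)] at hsum
    exact zero_ne_one hsum

theorem sum_gcd_val_eq_sum_divisors [NeZero M] {e : ℕ} (heM : e ∣ M) (F : ℕ → ℕ) :
    ∑ k : ZMod M, F (e.gcd k.val) = M / e * ∑ d ∈ e.divisors, φ (e / d) * F d := by
  have he : e ≠ 0 := ne_zero_of_dvd_ne_zero (NeZero.ne M) heM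
  have hfiber : ∑ n ∈ range e, F (e.gcd n) = ∑ d ∈ e.divisors, φ (e / d) * F d := by
    rw [← sum_fiberwise_of_maps_to fun n _ => Nat.mem_divisors.mpr ⟨Nat.gcd_dvd_left e n, he⟩]
    refine sum_congr rfl fun d hd => ?_
    rw [Nat.totient_div_of_dvd (Nat.dvd_of_mem_divisors hd), ← smul_eq_mul, ← sum_const]
    exact sum_congr rfl fun n hn => by rw [(mem_filter.mp hn).2]
  calc ∑ k : ZMod M, F (e.gcd k.val)
      = ∑ n ∈ range (M / e * e), F (e.gcd n) := by
        rw [Nat.div_mul_cancel heM]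
        exact sum_nbij' ZMod.val Nat.cast (fun k _ => mem_range.mpr k.val_lt)
          (fun _ _ => mem_univ _) (fun k _ => ZMod.natCast_zmod_val k)
          (fun n hn => ZMod.val_cast_of_lt (mem_range.mp hn)) (fun _ _ => rfl)
    _ = M / e * ∑ d ∈ e.divisors, φ (e / d) * F d := by
        have hsum := ((Nat.periodic_gcd e).comp F).sum_range_mul (M / e)
        simp only [comp_apply] at hsum
        rw [hsum, smul_eq_mul, hfiber]

theorem rot_rot (a b : ZMod M) (x : ZMod M → ZMod 2) : rot M a (rot M b x) = rot M (a + b) x :=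
  funext fun i => congrArg x (add_assoc i a b)

theorem rot_zero (x : ZMod M → ZMod 2) : rot M 0 x = x :=
  funext fun i => congrArg x (add_zero i)

theorem rotOrbit_eq_rotOrbit_iff {x y : ZMod M → ZMod 2} :
    rotOrbit M x = rotOrbit M y ↔ ∃ k, rot M k y = x := by
  constructor
  · intro h
    obtain ⟨k, hk⟩ : x ∈ rotOrbit M y := h ▸ ⟨0, (rot_zero x).symm⟩
    exact ⟨k, hk.symm⟩
  · rintro ⟨k, rfl⟩
    ext z
    constructor
    · rintro ⟨a, rfl⟩
      exact ⟨a + k, rot_rot a k y⟩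
    · rintro ⟨a, rfl⟩
      exact ⟨a - k, by rw [rot_rot, sub_add_cancel]⟩

theorem Vanishing.rot [NeZero M] {x : ZMod M → ZMod 2} (hx : Vanishing M x) (k : ZMod M) :
    Vanishing M (rot M k x) := by
  obtain ⟨d, hdM, heven, hper, hsum⟩ := vanishing_iff_sum_eq_one.mp hx
  refine vanishing_iff_sum_eq_one.mpr ⟨d, hdM, heven, fun i => ?_, ?_⟩
  · simp only [_root_.rot, add_right_comm i (d : ZMod M) k, hper (i + k)]
  · have hshift := hper.comp_natCast.sum_range_add k.val
    simp only [Nat.cast_add, ZMod.natCast_zmod_val] at hshift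
    rw [← hsum, ← hshift]
    rfl

instance [NeZero M] : AddAction (ZMod M) {x : ZMod M → ZMod 2 // Vanishing M x} where
  vadd k x := ⟨rot M k x, x.2.rot k⟩
  zero_vadd x := Subtype.ext (rot_zero x.1)
  add_vadd a b x := Subtype.ext (rot_rot a b x.1).symm

theorem card_vanishing_orbits_eq_card_orbitRel_quotient [NeZero M] :
    Nat.card {S : Set (ZMod M → ZMod 2) // ∃ x, Vanishing M x ∧ S = rotOrbit M x}
      = Nat.card
          (AddAction.orbitRel.Quotient (ZMod M) {x : ZMod M → ZMod 2 // Vanishing M x}) := by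
  let f (x : {x // Vanishing M x}) :
      {S : Set (ZMod M → ZMod 2) // ∃ x, Vanishing M x ∧ S = rotOrbit M x} :=
    ⟨rotOrbit M x, x, x.2, rfl⟩
  have hf : Surjective f := by
    rintro ⟨S, x, hx, rfl⟩
    exact ⟨⟨x, hx⟩, rfl⟩
  refine Nat.card_congr ((Setoid.quotientKerEquivOfSurjective f hf).symm.trans
    (Quotient.congrRight fun x y => ?_))
  rw [Setoid.ker_def, AddAction.orbitRel_apply, AddAction.mem_orbit_iff, Subtype.ext_iff]
  simp only [f, Subtype.ext_iff]
  exact rotOrbit_eq_rotOrbit_iff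

open scoped Classical in
theorem card_vanishing_orbits_mul_eq_sum_card_fixed [NeZero M] :
    Nat.card {S : Set (ZMod M → ZMod 2) // ∃ x, Vanishing M x ∧ S = rotOrbit M x} * M
      = ∑ k : ZMod M, #{x : ZMod M → ZMod 2 | Vanishing M x ∧ rot M k x = x} := by
  have hburnside := AddAction.sum_card_fixedBy_eq_card_orbits_mul_card_addGroup (ZMod M)
    {x : ZMod M → ZMod 2 // Vanishing M x}
  rw [ZMod.card] at hburnside
  rw [card_vanishing_orbits_eq_card_orbitRel_quotient, Nat.card_eq_fintype_card, ← hburnside]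
  refine sum_congr rfl fun k _ => ?_
  calc Fintype.card (AddAction.fixedBy _ k)
      = Fintype.card {x : {x // Vanishing M x} // rot M k x.1 = x.1} :=
        Fintype.card_congr
          (Equiv.subtypeEquivRight fun x => AddAction.mem_fixedBy.trans Subtype.ext_iff)
    _ = Fintype.card {x // Vanishing M x ∧ rot M k x = x} :=
        Fintype.card_congr (Equiv.subtypeSubtypeEquivSubtypeInter _ (fun x => rot M k x = x))
    _ = _ := Fintype.card_subtype _

end Words

theorem Nat.two_pow_mul_div_of_dvd {β γ m d : ℕ} (hβγ : β ≤ γ) (hd : d ∣ 2 ^ β * m) :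
    2 ^ γ * m / d = 2 ^ (γ - β) * (2 ^ β * m / d) := by
  rw [← pow_sub_mul_pow 2 hβγ, mul_assoc, Nat.mul_div_assoc _ hd]

theorem Nat.even_two_pow_mul_div_of_dvd {β γ m d : ℕ} (hβγ : β < γ)
    (hd : d ∣ 2 ^ β * m) : Even (2 ^ γ * m / d) := by
  rw [Nat.two_pow_mul_div_of_dvd hβγ.le hd]
  exact (Nat.even_pow.mpr ⟨even_two, (Nat.sub_pos_of_lt hβγ).ne'⟩).mul_right _

theorem Nat.exists_lt_dvd_two_pow_mul_odd_div {A m d : ℕ} (hm : Odd m) (hd : d ∣ 2 ^ A * m)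
    (heven : Even (2 ^ A * m / d)) : ∃ β < A, d ∣ 2 ^ β * m ∧ Odd (2 ^ β * m / d) := by
  have hM : 2 ^ A * m ≠ 0 := mul_ne_zero (pow_ne_zero _ two_ne_zero) hm.pos.ne'
  have hd0 : 0 < d := Nat.pos_of_ne_zero (ne_zero_of_dvd_ne_zero hM hd)
  have hq : 2 ^ A * m / d ≠ 0 := (Nat.div_pos (Nat.le_of_dvd (Nat.pos_of_ne_zero hM) hd) hd0).ne'
  obtain ⟨j, o, ho, hjo⟩ := Nat.exists_eq_two_pow_mul_odd hq
  have hj : j ≠ 0 := by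
    rintro rfl
    rw [hjo, pow_zero, one_mul] at heven
    exact Nat.not_even_iff_odd.mpr ho heven
  have hMeq : 2 ^ A * m = 2 ^ j * (d * o) := by
    rw [← Nat.mul_div_cancel' hd, hjo]
    ring
  have hjA : j ≤ A := (Nat.pow_dvd_pow_iff_le_right one_lt_two).mp
    (((Nat.coprime_two_left.mpr hm).pow_left j).dvd_of_dvd_mul_right ⟨d * o, hMeq⟩)
  have hlevel : 2 ^ (A - j) * m = d * o := by
    apply Nat.eq_of_mul_eq_mul_left (pow_pos two_pos j)
    rw [← hMeq, ← mul_assoc, ← pow_add, Nat.add_sub_cancel' hjA]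
  refine ⟨A - j, by omega, ?_⟩
  rw [hlevel, Nat.mul_div_cancel_left o hd0]
  exact ⟨Dvd.intro o rfl, ho⟩

theorem Nat.totient_two_pow_succ_mul_of_odd {t o : ℕ} (ho : Odd o) :
    φ (2 ^ (t + 1) * o) = 2 ^ t * φ o := by
  rw [Nat.totient_mul ((Nat.coprime_two_left.mpr ho).pow_left _),
    Nat.totient_prime_pow_succ Nat.prime_two]
  simp

theorem Nat.sum_filter_divisors_eq_sum_filter_div {β : Type*} [AddCommMonoid β] (n : ℕ)
    (p : ℕ → Prop) [DecidablePred p] (f : ℕ → β) :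
    ∑ i ∈ n.divisors with p i, f i = ∑ d ∈ n.divisors with p (n / d), f (n / d) := by
  rw [sum_filter, sum_filter, ← Nat.sum_div_divisors n]

theorem Nat.sum_filter_divisors_even_div {A m : ℕ} (hm : Odd m) (G : ℕ → ℕ) :
    ∑ d ∈ (2 ^ A * m).divisors with Even (2 ^ A * m / d), G d
      = ∑ β ∈ range A, ∑ d ∈ (2 ^ β * m).divisors with Odd (2 ^ β * m / d), G d := by
  have hM : 2 ^ A * m ≠ 0 := mul_ne_zero (pow_ne_zero _ two_ne_zero) hm.pos.ne'
  have hunion : (2 ^ A * m).divisors.filter (fun d => Even (2 ^ A * m / d))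
      = (range A).biUnion fun β => (2 ^ β * m).divisors.filter fun d => Odd (2 ^ β * m / d) := by
    ext d
    simp only [mem_filter, Nat.mem_divisors, mem_biUnion, mem_range]
    constructor
    · rintro ⟨⟨hd, -⟩, heven⟩
      obtain ⟨β, hβ, hdβ, hodd⟩ := Nat.exists_lt_dvd_two_pow_mul_odd_div hm hd heven
      exact ⟨β, hβ, ⟨hdβ, mul_ne_zero (pow_ne_zero _ two_ne_zero) hm.pos.ne'⟩, hodd⟩
    · rintro ⟨β, hβ, ⟨hdβ, -⟩, -⟩
      exact ⟨⟨hdβ.trans (mul_dvd_mul_right (pow_dvd_pow 2 hβ.le) m), hM⟩,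
        Nat.even_two_pow_mul_div_of_dvd hβ hdβ⟩
  rw [hunion, sum_biUnion]
  intro β _ γ _ hne
  simp only [Function.onFun, disjoint_left, mem_filter, Nat.mem_divisors]
  rintro d ⟨⟨hdβ, -⟩, hβodd⟩ ⟨⟨hdγ, -⟩, hγodd⟩
  rcases hne.lt_or_gt with h | h
  · exact Nat.not_even_iff_odd.mpr hγodd (Nat.even_two_pow_mul_div_of_dvd h hdβ)
  · exact Nat.not_even_iff_odd.mpr hβodd (Nat.even_two_pow_mul_div_of_dvd h hdγ)

section Levels

variable {M A m : ℕ}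

theorem vanishing_iff_exists_two_pow_mul (hM : M = 2 ^ A * m) (hm : Odd m)
    {x : ZMod M → ZMod 2} :
    Vanishing M x ↔
      ∃ β < A, Periodic x ↑(2 ^ β * m) ∧ ∑ j ∈ range (2 ^ β * m), x j = 1 := by
  subst hM
  rw [vanishing_iff_sum_eq_one]
  constructor
  · rintro ⟨d, hdM, heven, hper, hsum⟩
    obtain ⟨β, hβ, hdβ, hodd⟩ := Nat.exists_lt_dvd_two_pow_mul_odd_div hm hdM heven
    exact ⟨β, hβ, hper.natCast_of_dvd hdβ,
      (sum_range_eq_of_periodic_of_odd hper hdβ hodd).trans hsum⟩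
  · rintro ⟨β, hβ, hper, hsum⟩
    exact ⟨2 ^ β * m, mul_dvd_mul_right (pow_dvd_pow 2 hβ.le) m,
      Nat.even_two_pow_mul_div_of_dvd hβ dvd_rfl, hper, hsum⟩

theorem sum_range_two_pow_mul_eq_zero {β γ : ℕ} (hβγ : β < γ) {x : ZMod M → ZMod 2}
    (hx : Periodic x ↑(2 ^ β * m)) : ∑ j ∈ range (2 ^ γ * m), x j = 0 :=
  sum_range_eq_zero_of_periodic hx (mul_dvd_mul_right (pow_dvd_pow 2 hβγ.le) m)
    (Nat.even_two_pow_mul_div_of_dvd hβγ dvd_rfl)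

open scoped Classical in
theorem card_filter_vanishing_rot_eq_self [NeZero M] (hM : M = 2 ^ A * m) (hm : Odd m)
    (k : ZMod M) :
    #{x : ZMod M → ZMod 2 | Vanishing M x ∧ rot M k x = x}
      = ∑ β ∈ range A, if Odd (2 ^ β * m / (2 ^ β * m).gcd k.val)
          then 2 ^ ((2 ^ β * m).gcd k.val - 1) else 0 := by
  have hsplit : univ.filter (fun x : ZMod M → ZMod 2 => Vanishing M x ∧ rot M k x = x)
      = (range A).biUnion fun β => univ.filter fun x : ZMod M → ZMod 2 =>
          Periodic x ↑((2 ^ β * m).gcd k.val) ∧ ∑ j ∈ range (2 ^ β * m), x j = 1 := by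
    ext x
    simp only [mem_filter_univ, mem_biUnion, mem_range, vanishing_iff_exists_two_pow_mul hM hm,
      rot_eq_self_iff_periodic, periodic_natCast_gcd_iff]
    constructor
    · rintro ⟨⟨β, hβ, hper, hsum⟩, hk⟩
      exact ⟨β, hβ, ⟨hper, hk⟩, hsum⟩
    · rintro ⟨β, hβ, ⟨hper, hk⟩, hsum⟩
      exact ⟨⟨β, hβ, hper, hsum⟩, hk⟩
  rw [hsplit, card_biUnion]
  · refine sum_congr rfl fun β hβ => card_filter_periodic_sum_range_eq_one_of_dvd
      (Nat.gcd_pos_of_pos_left _ (mul_pos (by positivity) hm.pos)) (Nat.gcd_dvd_left _ _) ?_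
    exact hM ▸ mul_dvd_mul_right (pow_dvd_pow 2 (mem_range.mp hβ).le) m
  intro β _ γ _ hne
  simp only [Function.onFun, disjoint_left, mem_filter_univ, periodic_natCast_gcd_iff]
  rintro x ⟨⟨hβper, -⟩, hβsum⟩ ⟨⟨hγper, -⟩, hγsum⟩
  rcases hne.lt_or_gt with h | h
  · exact zero_ne_one ((sum_range_two_pow_mul_eq_zero h hβper).symm.trans hγsum)
  · exact zero_ne_one ((sum_range_two_pow_mul_eq_zero h hγper).symm.trans hβsum)

open scoped Classical in
theorem sum_card_filter_vanishing_rot_eq_self [NeZero M] (hM : M = 2 ^ A * m) (hm : Odd m) :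
    ∑ k : ZMod M, #{x : ZMod M → ZMod 2 | Vanishing M x ∧ rot M k x = x}
      = ∑ β ∈ range A, 2 ^ (A - β) *
          ∑ d ∈ (2 ^ β * m).divisors with Odd (2 ^ β * m / d),
            φ (2 ^ β * m / d) * 2 ^ (d - 1) := by
  simp only [card_filter_vanishing_rot_eq_self hM hm]
  rw [sum_comm]
  refine sum_congr rfl fun β hβ => ?_
  have hβA := (mem_range.mp hβ).le
  have hlevel : M / (2 ^ β * m) = 2 ^ (A - β) := by
    rw [hM, Nat.two_pow_mul_div_of_dvd hβA dvd_rfl, Nat.div_self (mul_pos (by positivity) hm.pos),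
      mul_one]
  rw [sum_gcd_val_eq_sum_divisors (hM ▸ mul_dvd_mul_right (pow_dvd_pow 2 hβA) m)
    (fun c => if Odd (2 ^ β * m / c) then 2 ^ (c - 1) else 0), hlevel, sum_filter]
  simp only [mul_ite, mul_zero]

theorem sum_levels_eq_sum_filter_divisors_even (hM : M = 2 ^ A * m) (hm : Odd m) :
    ∑ β ∈ range A, 2 ^ (A - β) * ∑ d ∈ (2 ^ β * m).divisors with Odd (2 ^ β * m / d),
        φ (2 ^ β * m / d) * 2 ^ (d - 1)
      = ∑ i ∈ M.divisors with Even i, φ i * 2 ^ (M / i) := by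
  subst hM
  rw [Nat.sum_filter_divisors_eq_sum_filter_div, Nat.sum_filter_divisors_even_div hm]
  refine sum_congr rfl fun β hβ => ?_
  rw [mul_sum]
  refine sum_congr rfl fun d hd => ?_
  simp only [mem_filter, Nat.mem_divisors] at hd
  obtain ⟨⟨hdβ, hβ0⟩, hodd⟩ := hd
  have hβA := mem_range.mp hβ
  obtain ⟨t, ht⟩ : ∃ t, A - β = t + 1 := ⟨A - β - 1, by omega⟩
  obtain ⟨s, rfl⟩ : ∃ s, d = s + 1 :=
    Nat.exists_eq_add_one_of_ne_zero (ne_zero_of_dvd_ne_zero hβ0 hdβ)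
  rw [Nat.div_div_self (hdβ.trans (mul_dvd_mul_right (pow_dvd_pow 2 hβA.le) m))
      (mul_ne_zero (pow_ne_zero _ two_ne_zero) hm.pos.ne'),
    Nat.two_pow_mul_div_of_dvd hβA.le hdβ, ht, Nat.totient_two_pow_succ_mul_of_odd hodd,
    Nat.add_sub_cancel]
  ring

end Levels

/-- For every positive integer `M`, the number of orbits of vanishing binary words of
length `M` under the rotation action of the cyclic group `ZMod M` equals
`(1/M) · Σ_{i | M, i even} φ(i) · 2^(M/i)`. -/
theorem number_of_vanishing_states (M : ℕ) [NeZero M] :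
    (Nat.card {S : Set (ZMod M → ZMod 2) // ∃ x, Vanishing M x ∧ S = rotOrbit M x} : ℚ)
      = (1 / M) *
        ∑ i ∈ M.divisors.filter (fun i => Even i),
          (Nat.totient i : ℚ) * 2 ^ (M / i) := by
  obtain ⟨A, m, hm, hM⟩ := Nat.exists_eq_two_pow_mul_odd (NeZero.ne M)
  have hcount :
      Nat.card {S : Set (ZMod M → ZMod 2) // ∃ x, Vanishing M x ∧ S = rotOrbit M x} * M
        = ∑ i ∈ M.divisors with Even i, φ i * 2 ^ (M / i) := by
    rw [card_vanishing_orbits_mul_eq_sum_card_fixed, sum_card_filter_vanishing_rot_eq_self hM hm,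
      sum_levels_eq_sum_filter_divisors_even hM hm]
  rw [one_div, eq_inv_mul_iff_mul_eq₀ (Nat.cast_ne_zero.mpr (NeZero.ne M)), mul_comm]
  exact_mod_cast hcount
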